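/- arXiv:2212.14871 — 3 statements merged into one kernel-verified Lean document; each statement's English description precedes it below -/
import Mathlib

section
/- With the section s((d,m)) = (s_a(d), d × m), where s_a(d) ∈ SO(3) satisfies s_a(d)·e₃ = d for every unit vector d, the twist of a pure translation g = (I, t) ∈ SE(3) at any ray x = (d,m) ∈ 𝓡 equals h(g,x) = s(g·x)⁻¹·g·s(x) = (I, ⟨t, d⟩·e₃). -/
noncomputable section
open scoped InnerProductSpace

/-- ℝ³ with the Euclidean norm. -/
abbrev E3 : Type := EuclideanSpace ℝ (Fin 3)

/-- Elements of SE(3): a pair of a 3×3 matrix and a translation vector. -/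
abbrev SE3 : Type := Matrix (Fin 3) (Fin 3) ℝ × E3

/-- Matrix-vector multiplication on ℝ³. -/
def mv (R : Matrix (Fin 3) (Fin 3) ℝ) (v : E3) : E3 := WithLp.toLp 2 (R.mulVec v)

/-- Cross product on ℝ³. -/
def cross3 (a b : E3) : E3 :=
  WithLp.toLp 2 ![a 1 * b 2 - a 2 * b 1, a 2 * b 0 - a 0 * b 2, a 0 * b 1 - a 1 * b 0]

/-- `R` is a special orthogonal 3×3 matrix: `RᵀR = I` and `det R = 1`. -/
def isSO3 (R : Matrix (Fin 3) (Fin 3) ℝ) : Prop :=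
  R.transpose * R = 1 ∧ R.det = 1

/-- `(d, m)` are Plücker coordinates of an oriented line: `d` is a unit
direction and `m` is a moment with `⟨d, m⟩ = 0`. -/
def isRay (d m : E3) : Prop := ‖d‖ = 1 ∧ ⟪d, m⟫_ℝ = 0

/-- The standard basis vector e₁. -/
def e1 : E3 := WithLp.toLp 2 ![1, 0, 0]

/-- The standard basis vector e₂. -/
def e2 : E3 := WithLp.toLp 2 ![0, 1, 0]

/-- The standard basis vector e₃. -/
def e3 : E3 := WithLp.toLp 2 ![0, 0, 1]

/-- Action of `(R, t) ∈ SE(3)` on Plücker coordinates: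
`(R,t)·(d,m) = (Rd, Rm + t × (Rd))`. -/
def rayAct (R : Matrix (Fin 3) (Fin 3) ℝ) (t : E3) (d m : E3) : E3 × E3 :=
  (mv R d, mv R m + cross3 t (mv R d))

/-- Multiplication in SE(3): `(R₁,t₁)·(R₂,t₂) = (R₁R₂, t₁ + R₁t₂)`. -/
def se3Mul (g₁ g₂ : SE3) : SE3 := (g₁.1 * g₂.1, g₁.2 + mv g₁.1 g₂.2)

/-- Inverse in SE(3) (for `g.1 ∈ SO(3)`): `(R,t)⁻¹ = (Rᵀ, -Rᵀt)`. -/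
def se3Inv (g : SE3) : SE3 := (g.1.transpose, -(mv g.1.transpose g.2))

/-- Action of `g ∈ SE(3)` on the ray space. -/
def act (g : SE3) (x : E3 × E3) : E3 × E3 := rayAct g.1 g.2 x.1 x.2

/-- Action of `g = (R,t) ∈ SE(3)` on points of ℝ³: `g·p = Rp + t`. -/
def actPt (g : SE3) (p : E3) : E3 := mv g.1 p + g.2

/-- The origin ray `η = (e₃, 0)`. -/
def eta : E3 × E3 := (e3, 0)

/-- The twist `h(g, x) = s(g·x)⁻¹ · g · s(x)` of a section `s`. -/
def twist (s : E3 × E3 → SE3) (g : SE3) (x : E3 × E3) : SE3 :=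
  se3Mul (se3Inv (s (act g x))) (se3Mul g (s x))

/-- Rotation by γ about the z-axis. -/
def RZ (γ : ℝ) : Matrix (Fin 3) (Fin 3) ℝ :=
  !![Real.cos γ, -Real.sin γ, 0; Real.sin γ, Real.cos γ, 0; 0, 0, 1]

/-- Rotation by β about the y-axis. -/
def RY (β : ℝ) : Matrix (Fin 3) (Fin 3) ℝ :=
  !![Real.cos β, 0, Real.sin β; 0, 1, 0; -Real.sin β, 0, Real.cos β]

/-- The underlying line of the ray with Plücker coordinates `(d, m)`:
`L(d,m) = {p : p × d = m}`. -/
def lineOf (d m : E3) : Set E3 := {p : E3 | cross3 p d = m}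

/-- Infimum of the Euclidean distances between points of the line `L(d,m)`
and points of the z-axis. -/
def Dzaxis (d m : E3) : ℝ :=
  sInf {r : ℝ | ∃ p ∈ lineOf d m, ∃ s : ℝ, r = dist p (s • e3)}

/-- The z-coordinate `g(x) = e₃·(c - λ·d)` (with `c = d × m` and
`λ = ((e₁·c)(e₁·d) + (e₂·c)(e₂·d))/(1 - (e₃·d)²)`) of the point of `L(d,m)`
closest to the z-axis (for `d ≠ ±e₃`). -/
def zfoot (d m : E3) : ℝ :=
  ⟪e3, cross3 d m - ((⟪e1, cross3 d m⟫_ℝ * ⟪e1, d⟫_ℝ + ⟪e2, cross3 d m⟫_ℝ * ⟪e2, d⟫_ℝ)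
      / (1 - ⟪e3, d⟫_ℝ ^ 2)) • d⟫_ℝ

/-! A pure translation fixes directions, so `s(g·x)` and `s(x)` carry the same rotation
`s_a(d)`, which cancels in the twist. The translation parts differ by `t - d × (t × d)`, the
component `⟨t, d⟩ d` of `t` along the unit vector `d`, and `s_a(d)ᵀ` maps `d` back to `e₃`. -/

open Matrix

lemma cross3_eq_crossProduct (a b : E3) : cross3 a b = WithLp.toLp 2 (a.ofLp ⨯₃ b.ofLp) := rfl

lemma cross3_add_right (a b c : E3) : cross3 a (b + c) = cross3 a b + cross3 a c := by
  simp [cross3_eq_crossProduct]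

lemma cross3_cross3 (a b c : E3) : cross3 a (cross3 b c) = ⟪a, c⟫_ℝ • b - ⟪a, b⟫_ℝ • c := by
  simp [cross3_eq_crossProduct, cross_cross_eq_smul_sub_smul',
    EuclideanSpace.inner_eq_star_dotProduct, dotProduct_comm]

lemma mv_one (v : E3) : mv 1 v = v := by simp [mv]

lemma mv_add (R : Matrix (Fin 3) (Fin 3) ℝ) (u v : E3) : mv R (u + v) = mv R u + mv R v := by
  simp [mv, mulVec_add]

lemma mv_sub (R : Matrix (Fin 3) (Fin 3) ℝ) (u v : E3) : mv R (u - v) = mv R u - mv R v := by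
  simp [mv, mulVec_sub]

lemma mv_smul (R : Matrix (Fin 3) (Fin 3) ℝ) (c : ℝ) (v : E3) : mv R (c • v) = c • mv R v := by
  simp [mv, mulVec_smul]

lemma mv_mv (A B : Matrix (Fin 3) (Fin 3) ℝ) (v : E3) : mv A (mv B v) = mv (A * B) v := by
  simp [mv, mulVec_mulVec]

lemma mv_transpose_eq_of_mv_eq {S : Matrix (Fin 3) (Fin 3) ℝ} (hS : Sᵀ * S = 1) {u v : E3}
    (h : mv S v = u) : mv Sᵀ u = v := by
  rw [← h, mv_mv, hS, mv_one]

lemma sub_cross3_cross3_of_norm_eq_one {d : E3} (hd : ‖d‖ = 1) (t : E3) :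
    t - cross3 d (cross3 t d) = ⟪t, d⟫_ℝ • d := by
  rw [cross3_cross3, real_inner_self_eq_norm_sq, hd, real_inner_comm]
  simp

lemma twist_translation (sa : E3 → Matrix (Fin 3) (Fin 3) ℝ) (t d m : E3) :
    twist (fun x => (sa x.1, cross3 x.1 x.2)) (1, t) (d, m)
      = ((sa d)ᵀ * sa d, mv (sa d)ᵀ (t - cross3 d (cross3 t d))) := by
  simp only [twist, se3Mul, se3Inv, act, rayAct, mv_one, one_mul, cross3_add_right, mv_add, mv_sub]
  congr 1
  abel

/-- for the section `s((d,m)) = (s_a(d), d × m)`, the twist of a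
pure translation `g = (I, t)` at any ray `x = (d,m)` equals `(I, ⟨t, d⟩·e₃)`. -/
theorem statement7 (sa : E3 → Matrix (Fin 3) (Fin 3) ℝ)
    (hsa : ∀ u : E3, ‖u‖ = 1 → isSO3 (sa u) ∧ mv (sa u) e3 = u)
    (t : E3) (d m : E3) (h : isRay d m) :
    twist (fun x => (sa x.1, cross3 x.1 x.2)) (1, t) (d, m)
      = (1, ⟪t, d⟫_ℝ • e3) := by
  obtain ⟨⟨hST, -⟩, hSe3⟩ := hsa d h.1
  rw [twist_translation, hST, sub_cross3_cross3_of_norm_eq_one h.1, mv_smul,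
    mv_transpose_eq_of_mv_eq hST hSe3]

end
end

section
/- Let ω_out, ω_in ∈ ℝ and let F : ℝ × ℝ → ℂ be arbitrary. For rays x = (d,m) ∈ 𝓡 with d ≠ ±e₃, define κ₂(x) = F(D(x), ⟨e₃, d⟩)·exp(−i·(ω_out − ω_in·⟨e₃, d⟩)·g(x)). Then for all γ, t ∈ ℝ and all such x: κ₂((R_Z(γ), t·e₃)·x) = exp(−i·(ω_out − ω_in·⟨e₃, d⟩)·t)·κ₂(x). -/
noncomputable section
open scoped InnerProductSpace

/-- The kernel `κ₂(x) = F(D(x), ⟨e₃, d⟩)·exp(−i·(ω_out − ω_in·⟨e₃, d⟩)·g(x))`. -/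
def kappa2 (ωout ωin : ℝ) (F : ℝ × ℝ → ℂ) (x : E3 × E3) : ℂ :=
  F (Dzaxis x.1 x.2, ⟪e3, x.1⟫_ℝ) *
    Complex.exp (-Complex.I * ((ωout : ℂ) - (ωin : ℂ) * (⟪e3, x.1⟫_ℝ : ℂ)) *
      (zfoot x.1 x.2 : ℂ))

/-! On points, `(R_Z(γ), t e₃)` is the rigid motion `p ↦ R_Z(γ) p + t e₃`: it maps the z-axis
onto itself (shifting it by `t`) and carries `L(x)` onto the line of the moved ray. Hence `D` and
`⟨e₃, d⟩` are invariant, while `g`, the height of the point of `L(x)` closest to the axis,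
increases by exactly `t`; so only the phase of `κ₂` changes, by `exp(−i(ω_out − ω_in⟨e₃, d⟩) t)`. -/

lemma mv_RZ (γ : ℝ) (v : E3) :
    mv (RZ γ) v = WithLp.toLp 2 ![Real.cos γ * v 0 - Real.sin γ * v 1,
      Real.sin γ * v 0 + Real.cos γ * v 1, v 2] := by
  ext i
  fin_cases i <;> simp [mv, RZ, dotProduct, Fin.sum_univ_three]
  ring

lemma mv_RZ_mv_RZ_neg (γ : ℝ) (v : E3) : mv (RZ γ) (mv (RZ (-γ)) v) = v := by
  have hcs := Real.sin_sq_add_cos_sq γ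
  rw [mv_RZ, mv_RZ]
  ext i
  fin_cases i <;> simp
  · linear_combination v 0 * hcs
  · linear_combination v 1 * hcs

lemma mv_RZ_injective (γ : ℝ) : Function.Injective (mv (RZ γ)) :=
  Function.LeftInverse.injective (g := mv (RZ (-γ))) fun v => by
    simpa using mv_RZ_mv_RZ_neg (-γ) v

lemma mv_RZ_cross3 (γ : ℝ) (a b : E3) :
    mv (RZ γ) (cross3 a b) = cross3 (mv (RZ γ) a) (mv (RZ γ) b) := by
  have hcs := Real.sin_sq_add_cos_sq γ
  rw [mv_RZ, mv_RZ, mv_RZ]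
  ext i
  fin_cases i <;> simp [cross3]
  · ring
  · ring
  · linear_combination (a 1 * b 0 - a 0 * b 1) * hcs

lemma cross3_add_left (a b c : E3) : cross3 (a + b) c = cross3 a c + cross3 b c := by
  ext i
  fin_cases i <;> simp [cross3] <;> ring

lemma inner_e3 (v : E3) : ⟪e3, v⟫_ℝ = v 2 := by
  simp [PiLp.inner_apply, Fin.sum_univ_three, e3]

lemma dist_mv_RZ_add_smul_e3 (γ t s : ℝ) (p : E3) :
    dist (mv (RZ γ) p + t • e3) ((s + t) • e3) = dist p (s • e3) := by
  have hcs := Real.sin_sq_add_cos_sq γ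
  rw [mv_RZ, EuclideanSpace.dist_eq, EuclideanSpace.dist_eq]
  congr 1
  simp [Fin.sum_univ_three, Real.dist_eq, sq_abs, e3]
  linear_combination (p 0 ^ 2 + p 1 ^ 2) * hcs

lemma mv_RZ_add_mem_lineOf_rayAct_iff (γ : ℝ) (u d m p : E3) :
    mv (RZ γ) p + u ∈ lineOf (rayAct (RZ γ) u d m).1 (rayAct (RZ γ) u d m).2 ↔
      p ∈ lineOf d m := by
  simp only [lineOf, rayAct, Set.mem_ofPred_eq, cross3_add_left, ← mv_RZ_cross3, add_left_inj]
  exact (mv_RZ_injective γ).eq_iff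

lemma Dzaxis_rayAct_RZ (γ t : ℝ) (d m : E3) :
    Dzaxis (rayAct (RZ γ) (t • e3) d m).1 (rayAct (RZ γ) (t • e3) d m).2 = Dzaxis d m := by
  unfold Dzaxis
  congr 1
  ext r
  constructor
  · rintro ⟨q, hq, s, rfl⟩
    obtain ⟨p, rfl⟩ : ∃ p, q = mv (RZ γ) p + t • e3 :=
      ⟨mv (RZ (-γ)) (q - t • e3), by simp [mv_RZ_mv_RZ_neg]⟩
    refine ⟨p, (mv_RZ_add_mem_lineOf_rayAct_iff γ _ d m p).1 hq, s - t, ?_⟩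
    simpa using dist_mv_RZ_add_smul_e3 γ t (s - t) p
  · rintro ⟨p, hp, s, rfl⟩
    exact ⟨mv (RZ γ) p + t • e3, (mv_RZ_add_mem_lineOf_rayAct_iff γ _ d m p).2 hp, s + t,
      (dist_mv_RZ_add_smul_e3 γ t s p).symm⟩

lemma inner_e3_rayAct_RZ (γ : ℝ) (u d m : E3) :
    ⟪e3, (rayAct (RZ γ) u d m).1⟫_ℝ = ⟪e3, d⟫_ℝ := by
  simp [rayAct, inner_e3, mv_RZ]

lemma zfoot_eq (d m : E3) :
    zfoot d m = (d 0 * m 1 - d 1 * m 0) -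
      ((d 1 * m 2 - d 2 * m 1) * d 0 + (d 2 * m 0 - d 0 * m 2) * d 1)
        / (1 - d 2 ^ 2) * d 2 := by
  simp [zfoot, cross3, e1, e2, e3, PiLp.inner_apply, Fin.sum_univ_three]

lemma sum_sq_coord_of_norm_eq_one {d : E3} (hd : ‖d‖ = 1) :
    d 0 ^ 2 + d 1 ^ 2 + d 2 ^ 2 = 1 := by
  have := EuclideanSpace.norm_sq_eq d
  simp_all [Fin.sum_univ_three]

lemma one_sub_sq_coord_two_ne_zero {d : E3} (hd : ‖d‖ = 1) (h1 : d ≠ e3) (h2 : d ≠ -e3) :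
    1 - d 2 ^ 2 ≠ 0 := by
  have hsum := sum_sq_coord_of_norm_eq_one hd
  intro h0
  have hd0 : d 0 = 0 := by nlinarith
  have hd1 : d 1 = 0 := by nlinarith
  rcases sq_eq_one_iff.mp (by linarith : d 2 ^ 2 = 1) with hd2 | hd2
  · exact h1 (by ext i; fin_cases i <;> simp [e3, hd0, hd1, hd2])
  · exact h2 (by ext i; fin_cases i <;> simp [e3, hd0, hd1, hd2])

lemma zfoot_rayAct_RZ (γ t : ℝ) {d : E3} (m : E3) (hd : ‖d‖ = 1) (hden : 1 - d 2 ^ 2 ≠ 0) :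
    zfoot (rayAct (RZ γ) (t • e3) d m).1 (rayAct (RZ γ) (t • e3) d m).2 = zfoot d m + t := by
  have hcs := Real.sin_sq_add_cos_sq γ
  simp only [zfoot_eq, rayAct, mv_RZ, cross3, e3, PiLp.add_apply, PiLp.smul_apply,
    smul_eq_mul, Matrix.cons_val_zero, Matrix.cons_val_one, Matrix.cons_val_two,
    Matrix.head_cons, Matrix.tail_cons]
  field_simp
  linear_combination (d 0 * m 1 - d 1 * m 0 + t * d 0 ^ 2 + t * d 1 ^ 2) * hcs +
    t * sum_sq_coord_of_norm_eq_one hd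

/-- `κ₂((R_Z(γ), t·e₃)·x) = exp(−i·(ω_out − ω_in·⟨e₃, d⟩)·t)·κ₂(x)`
for every ray `x = (d,m)` with `d ≠ ±e₃`. -/
theorem statement13 (ωout ωin : ℝ) (F : ℝ × ℝ → ℂ) (d m : E3) (h : isRay d m)
    (h1 : d ≠ e3) (h2 : d ≠ -e3) (γ t : ℝ) :
    kappa2 ωout ωin F (rayAct (RZ γ) (t • e3) d m)
      = Complex.exp (-Complex.I * ((ωout : ℂ) - (ωin : ℂ) * (⟪e3, d⟫_ℝ : ℂ)) * (t : ℂ))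
          * kappa2 ωout ωin F (d, m) := by
  unfold kappa2
  rw [Dzaxis_rayAct_RZ, inner_e3_rayAct_RZ,
    zfoot_rayAct_RZ γ t m h.1 (one_sub_sq_coord_two_ne_zero h.1 h1 h2)]
  push_cast
  rw [mul_add, Complex.exp_add]
  ring

end
end

section
/- For a ray x = (d,m) ∈ 𝓡 with m ≠ 0, set m̂ = m/‖m‖ and let x̂ be the 3×3 real matrix with columns d, m̂, and d × m̂. Then: (i) x̂ ∈ SO(3); (ii) for every R ∈ SO(3), writing R·x = (Rd, Rm) for the action of (R,0), the matrix associated to R·x equals R·x̂; and consequently (iii) for every group homomorphism ρ : SO(3) → GL(V) into the invertible linear maps of a vector space V and every function f : ℝ → V, the kernel κ(x) = ρ(x̂)(f(‖m‖)) satisfies κ(R·x) = ρ(R)(κ(x)) for all R ∈ SO(3) and all rays x with m ≠ 0. -/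
noncomputable section
open scoped InnerProductSpace

/-- The matrix `x̂` with columns `d`, `m̂ = m/‖m‖`, and `d × m̂`. -/
def hatMat (d m : E3) : Matrix (Fin 3) (Fin 3) ℝ :=
  Matrix.of fun i j => ![d, ‖m‖⁻¹ • m, cross3 d (‖m‖⁻¹ • m)] j i

/-! `x̂` is the transpose of the matrix with the orthonormal rows `d`, `m̂`, `d × m̂`, hence lies in
SO(3). A rotation `R` preserves `‖m‖`, and `Ra × Rb = adj(R)ᵀ (a × b) = R (a × b)`, so it maps this
frame to the frame of `R·x`. Equivariance of `κ` then follows since `ρ` is a homomorphism. -/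

open Matrix

section Frame

variable {K : Type*} [CommRing K]

theorem crossProduct_mulVec_mulVec (M : Matrix (Fin 3) (Fin 3) K) (a b : Fin 3 → K) :
    (M *ᵥ a) ⨯₃ (M *ᵥ b) = M.adjugateᵀ *ᵥ (a ⨯₃ b) := by
  ext i
  fin_cases i <;>
    simp [adjugate_fin_three, cross_apply, mulVec, dotProduct, Fin.sum_univ_three] <;> ring

theorem mulVec_dotProduct_mulVec {M : Matrix (Fin 3) (Fin 3) K} (hM : Mᵀ * M = 1)
    (v w : Fin 3 → K) : (M *ᵥ v) ⬝ᵥ (M *ᵥ w) = v ⬝ᵥ w := by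
  rw [dotProduct_mulVec, ← vecMul_transpose, vecMul_vecMul, hM, vecMul_one]

def frameMat (a b : Fin 3 → K) : Matrix (Fin 3) (Fin 3) K := Matrix.of ![a, b, a ⨯₃ b]

theorem frameMat_mul_transpose {a b : Fin 3 → K} (ha : a ⬝ᵥ a = 1) (hb : b ⬝ᵥ b = 1)
    (hab : a ⬝ᵥ b = 0) : frameMat a b * (frameMat a b)ᵀ = 1 := by
  have hc : a ⨯₃ b ⬝ᵥ a ⨯₃ b = 1 := by
    rw [cross_dot_cross, ha, hb, hab, dotProduct_comm b a, hab]; ring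
  ext i j
  change ![a, b, a ⨯₃ b] i ⬝ᵥ ![a, b, a ⨯₃ b] j = (1 : Matrix (Fin 3) (Fin 3) K) i j
  fin_cases i <;> fin_cases j <;>
    simp [one_apply, ha, hb, hab, hc, dotProduct_comm b a, dot_self_cross, dot_cross_self,
      dotProduct_comm (a ⨯₃ b)]

theorem det_frameMat (a b : Fin 3 → K) : (frameMat a b).det = a ⨯₃ b ⬝ᵥ a ⨯₃ b := by
  calc (frameMat a b).det = a ⬝ᵥ b ⨯₃ (a ⨯₃ b) := (triple_product_eq_det _ _ _).symm
    _ = a ⨯₃ b ⬝ᵥ a ⨯₃ b := by rw [triple_product_permutation, triple_product_permutation]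

theorem frameMat_mulVec_mulVec {M : Matrix (Fin 3) (Fin 3) K} (hM : M.adjugateᵀ = M)
    (a b : Fin 3 → K) : frameMat (M *ᵥ a) (M *ᵥ b) = frameMat a b * Mᵀ := by
  ext i j
  fin_cases i <;>
    simp [frameMat, crossProduct_mulVec_mulVec, hM, mul_apply, mulVec, dotProduct, mul_comm]

end Frame

theorem isSO3.adjugate_eq_transpose {R : Matrix (Fin 3) (Fin 3) ℝ} (hR : isSO3 R) :
    R.adjugate = Rᵀ := by
  rw [← inv_eq_left_inv hR.1, inv_def, hR.2, Ring.inverse_one, one_smul]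

theorem isSO3_transpose_frameMat {a b : Fin 3 → ℝ} (ha : a ⬝ᵥ a = 1) (hb : b ⬝ᵥ b = 1)
    (hab : a ⬝ᵥ b = 0) : isSO3 (frameMat a b)ᵀ := by
  refine ⟨by rw [transpose_transpose, frameMat_mul_transpose ha hb hab], ?_⟩
  rw [det_transpose, det_frameMat, cross_dot_cross, ha, hb, hab, dotProduct_comm b a, hab]
  ring

theorem real_inner_eq_dotProduct (v w : E3) : ⟪v, w⟫_ℝ = v.ofLp ⬝ᵥ w.ofLp := by
  rw [EuclideanSpace.inner_eq_star_dotProduct, star_trivial, dotProduct_comm]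

theorem norm_mv {R : Matrix (Fin 3) (Fin 3) ℝ} (hR : Rᵀ * R = 1) (v : E3) : ‖mv R v‖ = ‖v‖ := by
  rw [← sq_eq_sq₀ (norm_nonneg _) (norm_nonneg _), ← real_inner_self_eq_norm_sq,
    ← real_inner_self_eq_norm_sq, real_inner_eq_dotProduct, real_inner_eq_dotProduct, mv]
  exact mulVec_dotProduct_mulVec hR _ _

theorem hatMat_eq_transpose_frameMat (d m : E3) :
    hatMat d m = (frameMat d.ofLp (‖m‖⁻¹ • m.ofLp))ᵀ := by
  ext i j
  fin_cases j <;> fin_cases i <;> simp [hatMat, frameMat, cross3, cross_apply] <;> ring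

theorem isSO3_hatMat (d m : E3) (hx : isRay d m) (hm : m ≠ 0) : isSO3 (hatMat d m) := by
  have hu : ‖(‖m‖⁻¹ • m : E3)‖ = 1 := norm_smul_inv_norm hm
  rw [hatMat_eq_transpose_frameMat]
  apply isSO3_transpose_frameMat
  · rw [← real_inner_eq_dotProduct, real_inner_self_eq_norm_sq, hx.1, one_pow]
  · rw [← WithLp.ofLp_smul, ← real_inner_eq_dotProduct, real_inner_self_eq_norm_sq, hu, one_pow]
  · rw [← WithLp.ofLp_smul, ← real_inner_eq_dotProduct, real_inner_smul_right, hx.2, mul_zero]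

theorem hatMat_mv {R : Matrix (Fin 3) (Fin 3) ℝ} (hR : isSO3 R) (d m : E3) :
    hatMat (mv R d) (mv R m) = R * hatMat d m := by
  rw [hatMat_eq_transpose_frameMat, hatMat_eq_transpose_frameMat, norm_mv hR.1, mv, mv,
    ← mulVec_smul, frameMat_mulVec_mulVec (by rw [hR.adjugate_eq_transpose, transpose_transpose]),
    transpose_mul, transpose_transpose]

/-- (i) `x̂ ∈ SO(3)`; (ii) the matrix associated to the rotated
ray `R·x = (Rd, Rm)` equals `R·x̂`; (iii) consequently the kernel
`κ(x) = ρ(x̂)(f(‖m‖))` is SO(3)-equivariant: `κ(R·x) = ρ(R)(κ(x))`. -/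
theorem statement15 {V : Type*} [AddCommGroup V] [Module ℝ V]
    (ρ : Matrix (Fin 3) (Fin 3) ℝ → (V ≃ₗ[ℝ] V))
    (hρ : ∀ R₁ R₂ : Matrix (Fin 3) (Fin 3) ℝ, isSO3 R₁ → isSO3 R₂ →
      ρ (R₁ * R₂) = (ρ R₂).trans (ρ R₁))
    (f : ℝ → V) :
    (∀ d m : E3, isRay d m → m ≠ 0 → isSO3 (hatMat d m)) ∧
    (∀ R : Matrix (Fin 3) (Fin 3) ℝ, isSO3 R → ∀ d m : E3, isRay d m → m ≠ 0 →
      hatMat (mv R d) (mv R m) = R * hatMat d m) ∧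
    (∀ R : Matrix (Fin 3) (Fin 3) ℝ, isSO3 R → ∀ d m : E3, isRay d m → m ≠ 0 →
      ρ (hatMat (mv R d) (mv R m)) (f ‖mv R m‖) = ρ R (ρ (hatMat d m) (f ‖m‖))) := by
  refine ⟨isSO3_hatMat, fun R hR d m _ _ => hatMat_mv hR d m, ?_⟩
  intro R hR d m hx hm
  rw [hatMat_mv hR, hρ R _ hR (isSO3_hatMat d m hx hm), norm_mv hR.1]
  rfl

end
end
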